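/- Let 1 ≤ i < j ≤ m−1 and let n ≥ 2. Then β_i ≱_PS β_j; that is, there exists a profile of n preferences over m candidates at which the j-Borda rule β_j is manipulable but the i-Borda rule β_i is not manipulable. -/

import Mathlib

/-- A preference order on `m` candidates: `σ c` is the position of candidate `c`
(position `0` is the most preferred). `σ c < σ d` means `c` is strictly preferred to `d`. -/
abbrev Pref (m : ℕ) := Fin m ≃ Fin m

/-- A voting rule for `n` voters and `m` candidates. -/
abbrev Rule (m n : ℕ) := (Fin n → Pref m) → Fin m

/-- Total score of candidate `c` under score vector `s` (indexed by position) at profile `P`. -/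
def score {m n : ℕ} (s : Fin m → ℕ) (P : Fin n → Pref m) (c : Fin m) : ℕ :=
  ∑ v, s (P v c)

/-- The scoring rule with score vector `s`: the winner is the candidate that is first in the
lexicographic tie-breaking order (i.e. has the least index) among those of maximal score. -/
def winner {m n : ℕ} [NeZero m] (s : Fin m → ℕ) (P : Fin n → Pref m) : Fin m :=
  (Finset.univ.filter fun c => ∀ d, score s P d ≤ score s P c).min' (by
    obtain ⟨c, -, hc⟩ := Finset.exists_max_image Finset.univ (score s P) Finset.univ_nonempty
    exact ⟨c, Finset.mem_filter.mpr ⟨Finset.mem_univ c, fun d => hc d (Finset.mem_univ d)⟩⟩)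

/-- `k`-approval, `α_k`: one point for each of the top `k` positions. -/
def approval (m n k : ℕ) [NeZero m] : Rule m n :=
  winner (fun r => if (r : ℕ) < k then 1 else 0)

/-- `k`-Borda, `β_k`: `max (0, k - r + 1)` points for (`1`-indexed) position `r`, i.e. `k - r`
(truncated subtraction) points for `0`-indexed position `r`. -/
def kBorda (m n k : ℕ) [NeZero m] : Rule m n :=
  winner (fun r => k - (r : ℕ))

/-- `f` is manipulable at profile `P`: some voter `v` can misreport some preference `Q` and
obtain an outcome strictly preferred (by `v`'s true preferences) to the sincere outcome. -/
def Manipulable {m n : ℕ} (f : Rule m n) (P : Fin n → Pref m) : Prop :=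
  ∃ (v : Fin n) (Q : Pref m), P v (f (Function.update P v Q)) < P v (f P)

/-- `f ≥_PS g` : every profile at which `g` is manipulable is one at which `f` is manipulable. -/
def MoreManip {m n : ℕ} (f g : Rule m n) : Prop :=
  ∀ P : Fin n → Pref m, Manipulable g P → Manipulable f P

/-!
Two candidates, 0 and 1, are ranked in the top two places by all voters except at most two, and
the other candidates never catch up with them. Under `β_k` a voter who prefers the loser of these
two can at best bury the winner, which costs the winner the `k - 1` points of the second place,
while the loser already gets everything this voter can give it. If 0 wins (it wins ties), it
therefore suffices that its lead is at least `i - 1` under `β_i` and below `j - 1` under `β_j`;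
if 1 wins, that its lead is at least `i` under `β_i` and at most `j - 1` under `β_j`.

When 0 is to win, one voter ranks 0 first and 1 in place `d`; this voter adds `min k d` to the
lead, which is what lets the lead grow with `k`. For odd `n` and `i = 1`, candidate 1 wins
instead, by a lead `μ` with `i ≤ μ < j`.
-/

open Function

section Score

variable {m n : ℕ} (s : Fin m → ℕ)

theorem score_update_add (P : Fin n → Pref m) (v : Fin n) (Q : Pref m) (c : Fin m) :
    score s (update P v Q) c + s (P v c) = score s P c + s (Q c) := by
  simp only [score, ← Finset.add_sum_erase _ _ (Finset.mem_univ v), update_self]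
  rw [Finset.sum_congr rfl fun u hu => by rw [update_of_ne (Finset.ne_of_mem_erase hu)]]
  ring

theorem score_update_le_of_apply_eq_zero [NeZero m] (hs : Antitone s) {P : Fin n → Pref m}
    {v : Fin n} {c : Fin m} (hc : P v c = 0) (Q : Pref m) :
    score s (update P v Q) c ≤ score s P c := by
  have := score_update_add s P v Q c
  have : s (Q c) ≤ s (P v c) := hs (hc ▸ Fin.zero_le _)
  omega

theorem score_le_score_update_add (P : Fin n → Pref m) (v : Fin n) (Q : Pref m) (c : Fin m) :
    score s P c ≤ score s (update P v Q) c + s (P v c) :=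
  (score_update_add s P v Q c).symm ▸ Nat.le_add_right _ _

theorem score_cons (B : Pref m) (P : Fin n → Pref m) (c : Fin m) :
    score s (Fin.cons B P : Fin (n + 1) → Pref m) c = s (B c) + score s P c := by
  simp [score, Fin.sum_univ_succ]

theorem score_append {p q : ℕ} (P : Fin p → Pref m) (P' : Fin q → Pref m) (c : Fin m) :
    score s (Fin.append P P') c = score s P c + score s P' c := by
  simp [score, Fin.sum_univ_add]

theorem score_const (p : ℕ) (B : Pref m) (c : Fin m) :
    score s (fun _ : Fin p => B) c = p * s (B c) := by
  simp [score]

theorem score_le_score_of_forall_apply_le (hs : Antitone s) {P : Fin n → Pref m} {c e : Fin m}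
    (h : ∀ v, P v c ≤ P v e) : score s P e ≤ score s P c :=
  Finset.sum_le_sum fun v _ => hs (h v)

theorem score_cons_le_score_cons (hs : Antitone s) {B : Pref m} {P : Fin n → Pref m}
    {c e : Fin m} (hB : B c ≤ B e) (hP : score s P e ≤ score s P c) :
    score s (Fin.cons B P : Fin (n + 1) → Pref m) e ≤ score s (Fin.cons B P) c := by
  rw [score_cons, score_cons]
  exact Nat.add_le_add (hs hB) hP

end Score

section Winner

variable {m n : ℕ} [NeZero m] (s : Fin m → ℕ)

theorem score_le_score_winner (P : Fin n → Pref m) (e : Fin m) :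
    score s P e ≤ score s P (winner s P) :=
  (Finset.mem_filter.mp
    (Finset.min'_mem (Finset.univ.filter fun c => ∀ d, score s P d ≤ score s P c) _)).2 e

theorem winner_le_of_forall_score_le {P : Fin n → Pref m} {c : Fin m}
    (h : ∀ e, score s P e ≤ score s P c) : winner s P ≤ c :=
  Finset.min'_le _ _ (Finset.mem_filter.mpr ⟨Finset.mem_univ c, h⟩)

theorem winner_eq_of_forall_score {P : Fin n → Pref m} {c : Fin m}
    (hle : ∀ e, score s P e ≤ score s P c) (hlt : ∀ e < c, score s P e < score s P c) :
    winner s P = c :=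
  (winner_le_of_forall_score_le s hle).antisymm <| not_lt.mp fun hw =>
    (hlt _ hw).not_ge (score_le_score_winner s P c)

theorem winner_eq_zero {P : Fin n → Pref m} (h : ∀ e, score s P e ≤ score s P 0) :
    winner s P = 0 :=
  winner_eq_of_forall_score s h fun e he => absurd he (Fin.not_lt_zero e)

theorem winner_ne_of_score_le {P : Fin n → Pref m} {b c : Fin m} (hbc : b < c)
    (h : score s P c ≤ score s P b) : winner s P ≠ c := fun hw =>
  (winner_le_of_forall_score_le s fun e => (hw ▸ score_le_score_winner s P e).trans h).not_gt
    (hw ▸ hbc)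

end Winner

theorem Fin.eq_zero_or_eq_one_or_two_le {m : ℕ} (e : Fin (m + 2)) :
    e = 0 ∨ e = 1 ∨ 2 ≤ (e : ℕ) := by
  rcases e with ⟨_ | _ | e, he⟩ <;> simp [Fin.ext_iff]

def bordaScore {m : ℕ} (k : ℕ) (r : Fin m) : ℕ := k - r

theorem kBorda_eq_winner (m n k : ℕ) [NeZero m] : kBorda m n k = winner (bordaScore k) := rfl

@[simp] theorem bordaScore_zero {m : ℕ} (k : ℕ) : bordaScore k (0 : Fin (m + 1)) = k := by
  simp [bordaScore]

@[simp] theorem bordaScore_one {m : ℕ} (k : ℕ) : bordaScore k (1 : Fin (m + 2)) = k - 1 := by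
  simp [bordaScore]

theorem bordaScore_last {m k : ℕ} (hk : k ≤ m) : bordaScore k (Fin.last m) = 0 := by
  simp [bordaScore, hk]

theorem antitone_bordaScore {m : ℕ} (k : ℕ) : Antitone (bordaScore (m := m) k) :=
  fun _ _ h => Nat.sub_le_sub_left h k

section Ballots

variable {m : ℕ}

/- A `Pref` maps candidates to positions, so `prefBA = Equiv.swap 0 1` is the ballot
`1 ≻ 0 ≻ 2 ≻ ⋯`, and `prefBAt d` ranks 0 first, `d` second and 1 in place `d`. -/

def prefAB : Pref (m + 2) := Equiv.refl _

def prefBA : Pref (m + 2) := Equiv.swap 0 1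

def prefBAt (d : Fin (m + 2)) : Pref (m + 2) := Equiv.swap 1 d

/- Ranks 1 first and 0 last; the other candidates come in the reverse of their order in
`prefBAt d`, so that under `β_j`, `j ≤ m + 1`, the two ballots together give each of them at most
`j` points. -/
def buryZero (d : Fin (m + 2)) : Pref (m + 2) :=
  ((prefBAt d).trans (Equiv.swap d (Fin.last _))).trans Fin.revPerm

def buryOne : Pref (m + 2) := Equiv.swap 1 (Fin.last _)

@[simp] theorem prefAB_apply (c : Fin (m + 2)) : prefAB c = c := rfl

@[simp] theorem prefBA_zero : prefBA (0 : Fin (m + 2)) = 1 := Equiv.swap_apply_left _ _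

@[simp] theorem prefBA_one : prefBA (1 : Fin (m + 2)) = 0 := Equiv.swap_apply_right _ _

theorem prefBA_of_two_le {c : Fin (m + 2)} (hc : 2 ≤ (c : ℕ)) : prefBA c = c :=
  Equiv.swap_apply_of_ne_of_ne (by rintro rfl; simp at hc) (by rintro rfl; simp at hc)

@[simp] theorem prefBAt_zero {d : Fin (m + 2)} (hd : d ≠ 0) : prefBAt d 0 = 0 :=
  Equiv.swap_apply_of_ne_of_ne (by simp) hd.symm

@[simp] theorem prefBAt_one (d : Fin (m + 2)) : prefBAt d 1 = d := Equiv.swap_apply_left _ _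

@[simp] theorem buryZero_zero {d : Fin (m + 2)} (hd : d ≠ 0) : buryZero d 0 = Fin.last _ := by
  simp [buryZero, prefBAt_zero hd, Equiv.swap_apply_of_ne_of_ne hd.symm (Fin.last_pos).ne]

@[simp] theorem buryZero_one (d : Fin (m + 2)) : buryZero d 1 = 0 := by
  simp [buryZero]

theorem le_val_buryZero_add_val_prefBAt (d : Fin (m + 2)) {e : Fin (m + 2)} (he : e ≠ 1) :
    m + 1 ≤ (buryZero d e : ℕ) + prefBAt d e := by
  have hne : prefBAt d e ≠ d := fun h => he ((prefBAt d).injective (h.trans (prefBAt_one d).symm))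
  have hswap : (Equiv.swap d (Fin.last _) (prefBAt d e) : ℕ) ≤ prefBAt d e := by
    rw [Equiv.swap_apply_def, if_neg hne]
    split_ifs with h
    · exact h ▸ Fin.le_last d
    · exact le_rfl
  simp only [buryZero, Equiv.trans_apply, Fin.revPerm_apply, Fin.val_rev]
  omega

@[simp] theorem buryOne_zero : buryOne (0 : Fin (m + 2)) = 0 :=
  Equiv.swap_apply_of_ne_of_ne (by simp) (Fin.last_pos).ne

@[simp] theorem buryOne_one : buryOne (1 : Fin (m + 2)) = Fin.last _ := Equiv.swap_apply_left _ _

end Ballots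

section Profiles

variable {m : ℕ}

def abbaBlocks (p q : ℕ) : Fin (p + q) → Pref (m + 2) :=
  Fin.append (fun _ => prefAB) (fun _ => prefBA)

theorem abbaBlocks_apply (p q : ℕ) (v : Fin (p + q)) :
    abbaBlocks (m := m) p q v = prefAB ∨ abbaBlocks (m := m) p q v = prefBA := by
  refine Fin.addCases (fun u => ?_) (fun u => ?_) v <;> simp [abbaBlocks]

theorem score_abbaBlocks_zero_add {k : ℕ} (hk : 1 ≤ k) (p q : ℕ) :
    score (bordaScore k) (abbaBlocks (m := m) p q) 0 + q =
      score (bordaScore k) (abbaBlocks (m := m) p q) 1 + p := by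
  obtain ⟨k, rfl⟩ := Nat.exists_eq_add_of_le' hk
  simp [abbaBlocks, score_append, score_const, bordaScore]
  ring

theorem score_abbaBlocks_le (k p q : ℕ) {c e : Fin (m + 2)} (hc : (c : ℕ) ≤ 1)
    (he : 2 ≤ (e : ℕ)) :
    score (bordaScore k) (abbaBlocks p q) e ≤ score (bordaScore k) (abbaBlocks p q) c := by
  refine score_le_score_of_forall_apply_le _ (antitone_bordaScore k) fun v => ?_
  rcases abbaBlocks_apply p q v with h | h <;> rw [h, Fin.le_def]
  · simp only [prefAB_apply]; omega
  · rw [prefBA_of_two_le he]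
    rcases Fin.eq_zero_or_eq_one_or_two_le c with rfl | rfl | h2
    · simp only [prefBA_zero, Fin.val_one]; omega
    · simp
    · omega

end Profiles

section ZeroWins

variable {m : ℕ} {d : Fin (m + 2)} (ρ t : ℕ)

def profileBAt (B : Pref (m + 2)) (d : Fin (m + 2)) (ρ t : ℕ) :
    Fin (t + ρ + t + 1 + 1) → Pref (m + 2) :=
  Fin.cons B (Fin.cons (prefBAt d) (abbaBlocks (t + ρ) t))

@[simp] theorem profileBAt_zero (B : Pref (m + 2)) : profileBAt B d ρ t 0 = B := rfl

@[simp] theorem update_profileBAt_zero (B B' : Pref (m + 2)) :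
    update (profileBAt B d ρ t) 0 B' = profileBAt B' d ρ t :=
  Fin.update_cons_zero _ _ _

theorem score_profileBAt (s : Fin (m + 2) → ℕ) (B : Pref (m + 2)) (c : Fin (m + 2)) :
    score s (profileBAt B d ρ t) c =
      s (B c) + s (prefBAt d c) + score s (abbaBlocks (t + ρ) t) c := by
  simp only [profileBAt, score_cons, add_assoc]

theorem score_profileBAt_prefBA_zero_add (hd : d ≠ 0) {k : ℕ} (hk : 1 ≤ k) :
    score (bordaScore k) (profileBAt prefBA d ρ t) 0 + (k - d) + 1 =
      score (bordaScore k) (profileBAt prefBA d ρ t) 1 + k + ρ := by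
  have := score_abbaBlocks_zero_add (m := m) hk (t + ρ) t
  simp only [score_profileBAt, prefBA_zero, prefBA_one, prefBAt_zero hd, prefBAt_one,
    bordaScore_zero, bordaScore_one]
  rw [bordaScore]
  omega

theorem winner_profileBAt_prefBA (hd : d ≠ 0) {k : ℕ} (hk : 1 ≤ k) :
    winner (bordaScore k) (profileBAt prefBA d ρ t) = 0 := by
  refine winner_eq_zero _ fun e => ?_
  rcases Fin.eq_zero_or_eq_one_or_two_le e with rfl | rfl | he
  · exact le_rfl
  · have := score_profileBAt_prefBA_zero_add ρ t hd hk
    have : 1 ≤ (d : ℕ) := Nat.one_le_iff_ne_zero.mpr (Fin.val_ne_iff.mpr hd)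
    omega
  · refine score_cons_le_score_cons _ (antitone_bordaScore k) ?_ <|
      score_cons_le_score_cons _ (antitone_bordaScore k) ?_ <|
        score_abbaBlocks_le k _ _ (by simp) he
    · rw [prefBA_of_two_le he, prefBA_zero, Fin.le_def, Fin.val_one]; omega
    · rw [prefBAt_zero hd]; exact Fin.zero_le _

theorem winner_profileBAt_buryZero (hd : d ≠ 0) {j : ℕ} (hdj : d + ρ < j) (hj : j ≤ m + 1) :
    winner (bordaScore j) (profileBAt (buryZero d) d ρ t) = 1 := by
  have hR := score_abbaBlocks_zero_add (m := m) (by omega : 1 ≤ j) (t + ρ) t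
  have hlt : score (bordaScore j) (profileBAt (buryZero d) d ρ t) 0 <
      score (bordaScore j) (profileBAt (buryZero d) d ρ t) 1 := by
    rw [score_profileBAt, score_profileBAt, buryZero_zero hd, buryZero_one, prefBAt_zero hd,
      prefBAt_one, bordaScore_last hj, bordaScore_zero, bordaScore]
    omega
  refine winner_eq_of_forall_score _ (fun e => ?_) fun e he => ?_
  · rcases Fin.eq_zero_or_eq_one_or_two_le e with rfl | rfl | he
    · exact hlt.le
    · exact le_rfl
    · have hsum := le_val_buryZero_add_val_prefBAt d (e := e) (by rintro rfl; simp at he)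
      have hRe := score_abbaBlocks_le (m := m) j (t + ρ) t (c := 1) (by simp) he
      rw [score_profileBAt, score_profileBAt, buryZero_one, prefBAt_one, bordaScore_zero]
      simp only [bordaScore]
      omega
  · rwa [(Fin.lt_one_iff e).mp he]

theorem manipulable_profileBAt_prefBA (hd : d ≠ 0) {j : ℕ} (hdj : d + ρ < j)
    (hj : j ≤ m + 1) :
    Manipulable (kBorda (m + 2) _ j) (profileBAt prefBA d ρ t) := by
  refine ⟨0, buryZero d, ?_⟩
  rw [kBorda_eq_winner, update_profileBAt_zero, winner_profileBAt_buryZero ρ t hd hdj hj,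
    winner_profileBAt_prefBA ρ t hd (by omega)]
  simp

theorem profileBAt_prefBA_apply (hd : d ≠ 0) (v : Fin (t + ρ + t + 1 + 1)) :
    profileBAt prefBA d ρ t v = prefBA ∨ profileBAt prefBA d ρ t v 0 = 0 := by
  refine Fin.cases (Or.inl rfl) (fun u => Fin.cases (Or.inr (prefBAt_zero hd)) (fun r => ?_) u) v
  rcases abbaBlocks_apply (m := m) (t + ρ) t r with h | h
  · exact Or.inr (by simp [profileBAt, h])
  · exact Or.inl (by simp [profileBAt, h])

theorem not_manipulable_profileBAt_prefBA (hd : d ≠ 0) {i : ℕ} (hi : 1 ≤ i)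
    (hid : i ≤ d + ρ) :
    ¬ Manipulable (kBorda (m + 2) _ i) (profileBAt prefBA d ρ t) := by
  rintro ⟨v, Q, hv⟩
  rw [kBorda_eq_winner, winner_profileBAt_prefBA ρ t hd hi] at hv
  rcases profileBAt_prefBA_apply ρ t hd v with hPv | hPv
  · rw [hPv, prefBA_zero, Fin.lt_one_iff, ← prefBA_one, prefBA.injective.eq_iff] at hv
    refine winner_ne_of_score_le _ (b := 0) Fin.zero_lt_one ?_ hv
    have h1 := score_update_le_of_apply_eq_zero _ (antitone_bordaScore i)
      (P := profileBAt prefBA d ρ t) (c := 1) (by rw [hPv, prefBA_one]) Q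
    have h0 := score_le_score_update_add (bordaScore i) (profileBAt prefBA d ρ t) v Q 0
    have hmargin := score_profileBAt_prefBA_zero_add ρ t hd hi
    rw [hPv, prefBA_zero, bordaScore_one] at h0
    omega
  · rw [hPv] at hv
    exact Fin.not_lt_zero _ hv

end ZeroWins

section OneAhead

variable {m : ℕ} (μ t : ℕ)

def profileOneAhead (B : Pref (m + 2)) (μ t : ℕ) : Fin (t + (t + μ + 1) + 1) → Pref (m + 2) :=
  Fin.cons B (abbaBlocks t (t + μ + 1))

@[simp] theorem update_profileOneAhead_zero (B B' : Pref (m + 2)) :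
    update (profileOneAhead B μ t) 0 B' = profileOneAhead B' μ t :=
  Fin.update_cons_zero _ _ _

theorem score_profileOneAhead (s : Fin (m + 2) → ℕ) (B : Pref (m + 2)) (c : Fin (m + 2)) :
    score s (profileOneAhead B μ t) c = s (B c) + score s (abbaBlocks t (t + μ + 1)) c :=
  score_cons _ _ _ _

theorem score_profileOneAhead_prefAB_one {k : ℕ} (hk : 1 ≤ k) :
    score (bordaScore k) (profileOneAhead (m := m) prefAB μ t) 1 =
      score (bordaScore k) (profileOneAhead (m := m) prefAB μ t) 0 + μ := by
  have := score_abbaBlocks_zero_add (m := m) hk t (t + μ + 1)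
  simp only [score_profileOneAhead, prefAB_apply, bordaScore_zero, bordaScore_one]
  omega

theorem winner_profileOneAhead_prefAB {k : ℕ} (hk : 1 ≤ k) (hμ : 1 ≤ μ) :
    winner (bordaScore k) (profileOneAhead (m := m) prefAB μ t) = 1 := by
  have hlt := score_profileOneAhead_prefAB_one μ t (m := m) hk
  refine winner_eq_of_forall_score _ (fun e => ?_) fun e he => ?_
  · rcases Fin.eq_zero_or_eq_one_or_two_le e with rfl | rfl | he
    · omega
    · exact le_rfl
    · refine score_cons_le_score_cons _ (antitone_bordaScore k) ?_ <|
        score_abbaBlocks_le k _ _ (by simp) he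
      rw [prefAB_apply, prefAB_apply, Fin.le_def, Fin.val_one]; omega
  · rw [(Fin.lt_one_iff e).mp he]; omega

theorem winner_profileOneAhead_buryOne {j : ℕ} (hμj : μ < j) (hj : j ≤ m + 1) :
    winner (bordaScore j) (profileOneAhead (m := m) buryOne μ t) = 0 := by
  refine winner_eq_zero _ fun e => ?_
  rcases Fin.eq_zero_or_eq_one_or_two_le e with rfl | rfl | he
  · exact le_rfl
  · have := score_abbaBlocks_zero_add (m := m) (by omega : 1 ≤ j) t (t + μ + 1)
    rw [score_profileOneAhead, score_profileOneAhead, buryOne_zero, buryOne_one,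
      bordaScore_zero, bordaScore_last hj]
    omega
  · refine score_cons_le_score_cons _ (antitone_bordaScore j) ?_ <|
      score_abbaBlocks_le j _ _ (by simp) he
    rw [buryOne_zero]; exact Fin.zero_le _

theorem manipulable_profileOneAhead_prefAB (hμ : 1 ≤ μ) {j : ℕ} (hμj : μ < j)
    (hj : j ≤ m + 1) :
    Manipulable (kBorda (m + 2) _ j) (profileOneAhead prefAB μ t) := by
  refine ⟨0, buryOne, ?_⟩
  rw [kBorda_eq_winner, update_profileOneAhead_zero, winner_profileOneAhead_buryOne μ t hμj hj,
    winner_profileOneAhead_prefAB μ t (by omega) hμ]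
  simp [profileOneAhead]

theorem profileOneAhead_prefAB_apply (v : Fin (t + (t + μ + 1) + 1)) :
    profileOneAhead (m := m) prefAB μ t v = prefAB ∨
      profileOneAhead (m := m) prefAB μ t v 1 = 0 := by
  refine Fin.cases (Or.inl rfl) (fun r => ?_) v
  rcases abbaBlocks_apply (m := m) t (t + μ + 1) r with h | h
  · exact Or.inl (by simp [profileOneAhead, h])
  · exact Or.inr (by simp [profileOneAhead, h])

theorem not_manipulable_profileOneAhead_prefAB {i : ℕ} (hi : 1 ≤ i) (hiμ : i ≤ μ) :
    ¬ Manipulable (kBorda (m + 2) _ i) (profileOneAhead prefAB μ t) := by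
  rintro ⟨v, Q, hv⟩
  rw [kBorda_eq_winner, winner_profileOneAhead_prefAB μ t hi (by omega)] at hv
  rcases profileOneAhead_prefAB_apply μ t v with hPv | hPv
  · rw [hPv, prefAB_apply, prefAB_apply, Fin.lt_one_iff] at hv
    have h0 := score_update_le_of_apply_eq_zero _ (antitone_bordaScore i)
      (P := profileOneAhead prefAB μ t) (c := 0) (by rw [hPv, prefAB_apply]) Q
    have h1 := score_le_score_update_add (bordaScore i) (profileOneAhead prefAB μ t) v Q 1
    have hmargin := score_profileOneAhead_prefAB_one μ t (m := m) hi
    have hmax := score_le_score_winner (bordaScore i) (update (profileOneAhead prefAB μ t) v Q) 1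
    rw [hPv, prefAB_apply, bordaScore_one] at h1
    rw [hv] at hmax
    omega
  · rw [hPv] at hv
    exact Fin.not_lt_zero _ hv

end OneAhead

/-- For `1 ≤ i < j ≤ m-1` and `n ≥ 2`: `β_i ≱_PS β_j`. -/
theorem stmt_11 (m n i j : ℕ) [NeZero m] (hi : 1 ≤ i) (hij : i < j) (hj : j ≤ m - 1)
    (hn : 2 ≤ n) :
    ∃ P : Fin n → Pref m,
      Manipulable (kBorda m n j) P ∧ ¬ Manipulable (kBorda m n i) P := by
  obtain ⟨m, rfl⟩ : ∃ m', m = m' + 2 := ⟨m - 2, by omega⟩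
  obtain ⟨t, ht | ht⟩ := Nat.even_or_odd' n
  · obtain rfl : n = (t - 1) + 0 + (t - 1) + 1 + 1 := by omega
    have hd : (⟨i, by omega⟩ : Fin (m + 2)) ≠ 0 := Fin.ne_of_val_ne (by simp; omega)
    exact ⟨_, manipulable_profileBAt_prefBA 0 _ hd (by simpa) (by omega),
      not_manipulable_profileBAt_prefBA 0 _ hd hi (by simp)⟩
  obtain rfl | hi2 := eq_or_lt_of_le hi
  · obtain rfl : n = (t - 1) + ((t - 1) + 1 + 1) + 1 := by omega
    exact ⟨_, manipulable_profileOneAhead_prefAB 1 _ le_rfl hij (by omega),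
      not_manipulable_profileOneAhead_prefAB 1 _ le_rfl le_rfl⟩
  · obtain rfl : n = (t - 1) + 1 + (t - 1) + 1 + 1 := by omega
    have hd : (⟨i - 1, by omega⟩ : Fin (m + 2)) ≠ 0 := Fin.ne_of_val_ne (by simp; omega)
    exact ⟨_, manipulable_profileBAt_prefBA 1 _ hd (by simp; omega) (by omega),
      not_manipulable_profileBAt_prefBA 1 _ hd hi (by simp; omega)⟩
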